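/- A tuple (γ, λ, η, x) satisfies Σ_k λ_k d_k − Σ_l ȳ_l² R_l x_l η_l ≤ γ for all d ∈ Ξ' if and only if there exist t ∈ ℝ and w ∈ ℝ^N₊ such that t + (1/(N(1−α))) Σ_i w_i − Σ_l ȳ_l² R_l x_l η_l ≤ γ and t + w_i ≥ Σ_k λ_k d^i_k for each i. -/

import Mathlib

/-!
The constraint asks that the largest value of `μ ↦ ∑ μ i a i` over the capped simplex
`{μ ≥ 0, ∑ μ = 1, μ ≤ c}` be at most a bound, where `a i = ∑ k, λ k d^i k`. By LP duality this
maximum equals `min_t t + c ∑ i (a i - t)⁺` (the CVaR formula), and `w i = (a i - t)⁺` are the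
dual variables. Weak duality is a one-line estimate. For strong duality take a quantile `t`
of `a`, i.e. `c · #{a > t} ≤ 1 ≤ c · #{a ≥ t}`, and let `μ` put weight `c` on the values above
`t` and spread the remaining mass evenly over the values equal to `t`.
-/

open Finset

section

variable {ι : Type*} [Fintype ι]

theorem sum_mul_le_add_mul_sum {μ w a : ι → ℝ} {c t : ℝ}
    (hμ₀ : ∀ i, 0 ≤ μ i) (hμ₁ : ∑ i, μ i = 1) (hμc : ∀ i, μ i ≤ c)
    (hw₀ : ∀ i, 0 ≤ w i) (haw : ∀ i, a i ≤ t + w i) :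
    ∑ i, μ i * a i ≤ t + c * ∑ i, w i :=
  calc ∑ i, μ i * a i
      ≤ ∑ i, μ i * (t + w i) := sum_le_sum fun i _ => mul_le_mul_of_nonneg_left (haw i) (hμ₀ i)
    _ = t + ∑ i, μ i * w i := by simp only [mul_add, sum_add_distrib, ← sum_mul, hμ₁, one_mul]
    _ ≤ t + c * ∑ i, w i := by
      rw [mul_sum]
      gcongr with i
      · exact hw₀ i
      · exact hμc i

theorem exists_quantile (a : ι → ℝ) {c : ℝ} (hc : 1 ≤ c * Fintype.card ι) :
    ∃ t, c * #{i | t < a i} ≤ 1 ∧ 1 ≤ c * #{i | t ≤ a i} := by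
  classical
  have hc₀ : 0 ≤ c := (pos_of_mul_pos_left (one_pos.trans_le hc) (Nat.cast_nonneg _)).le
  have : Nonempty ι := Fintype.card_pos_iff.mp (Nat.pos_of_ne_zero fun h => by norm_num [h] at hc)
  set S : Finset ι := {j | 1 ≤ c * #{i | a j ≤ a i}}
  have hS : S.Nonempty := by
    obtain ⟨j₀, -, hj₀⟩ := univ.exists_min_image a univ_nonempty
    refine ⟨j₀, mem_filter.2 ⟨mem_univ _, ?_⟩⟩
    rwa [filter_true_of_mem fun i _ => hj₀ i (mem_univ i), card_univ]
  obtain ⟨j, hjS, hjmax⟩ := S.exists_max_image a hS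
  refine ⟨a j, ?_, (mem_filter.1 hjS).2⟩
  by_contra! hlt
  -- the smallest value strictly above `a j` would also lie in `S`
  have hne : ({i | a j < a i} : Finset ι).Nonempty :=
    card_pos.1 (Nat.pos_of_ne_zero fun h => by norm_num [h] at hlt)
  obtain ⟨k, hk, hkmin⟩ := exists_min_image _ a hne
  have hkS : k ∈ S := by
    refine mem_filter.2 ⟨mem_univ _, hlt.le.trans ?_⟩
    exact mul_le_mul_of_nonneg_left
      (Nat.cast_le.2 (card_le_card fun i hi => mem_filter.2 ⟨mem_univ _, hkmin i hi⟩)) hc₀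
  exact (hjmax k hkS).not_gt (mem_filter.1 hk).2

theorem exists_capped_weights_sum_mul_eq (a : ι → ℝ) {c : ℝ} (hc : 1 ≤ c * Fintype.card ι) :
    ∃ (t : ℝ) (μ : ι → ℝ), (∀ i, 0 ≤ μ i) ∧ ∑ i, μ i = 1 ∧ (∀ i, μ i ≤ c) ∧
      ∑ i, μ i * a i = t + c * ∑ i, max (a i - t) 0 := by
  classical
  obtain ⟨t, hgt, hge⟩ := exists_quantile a hc
  set nGt : ℝ := ((#{i | t < a i} : ℕ) : ℝ)
  set nEq : ℝ := ((#{i | a i = t} : ℕ) : ℝ)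
  have hnge : (#{i | t ≤ a i} : ℝ) = nGt + nEq := by
    rw [← Nat.cast_add, ← card_union_of_disjoint (disjoint_filter.2 fun i _ h h' => h.ne' h')]
    congr 2
    ext i
    simp [le_iff_lt_or_eq, eq_comm]
  set ρ := (1 - c * nGt) / nEq
  have hρ : ρ * nEq = 1 - c * nGt :=
    div_mul_cancel_of_imp fun h => by rw [hnge, h, add_zero] at hge; linarith
  have hρc : ∀ i, a i = t → ρ ≤ c := fun i hi => by
    have : 0 < nEq := Nat.cast_pos.2 (card_pos.2 ⟨i, by simpa using hi⟩)
    rw [div_le_iff₀ this]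
    rw [hnge] at hge
    linarith
  set μ : ι → ℝ := fun i => if t < a i then c else if a i = t then ρ else 0
  have hμ : ∀ f : ι → ℝ,
      ∑ i, μ i * f i = c * ∑ i with t < a i, f i + ρ * ∑ i with a i = t, f i := by
    intro f
    simp only [sum_filter, mul_sum, ← sum_add_distrib]
    refine sum_congr rfl fun i _ => ?_
    simp only [μ]
    split_ifs with h₁ h₂ <;> first | (exfalso; linarith) | ring
  have hc₀ : 0 ≤ c := (pos_of_mul_pos_left (one_pos.trans_le hge) (Nat.cast_nonneg _)).le
  refine ⟨t, μ, fun i => ?_, ?_, fun i => ?_, ?_⟩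
  · simp only [μ]
    split_ifs
    exacts [hc₀, div_nonneg (by linarith) (Nat.cast_nonneg _), le_rfl]
  · simpa [nGt, nEq, hρ] using hμ fun _ => 1
  · simp only [μ]
    split_ifs with h₁ h₂
    exacts [le_rfl, hρc i h₂, hc₀]
  · have hties : ∑ i with a i = t, a i = nEq * t := by
      rw [sum_congr rfl fun i hi => (mem_filter.1 hi).2, sum_const, nsmul_eq_mul]
    have hpos : ∑ i, max (a i - t) 0 = ∑ i with t < a i, a i - nGt * t := by
      rw [← nsmul_eq_mul, ← sum_const, ← sum_sub_distrib, sum_filter]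
      refine sum_congr rfl fun i _ => ?_
      split_ifs with h
      exacts [max_eq_left (sub_nonneg.2 h.le), max_eq_right (by linarith [not_lt.1 h])]
    rw [hμ, hties, hpos]
    linear_combination t * hρ

theorem forall_capped_weights_sum_mul_le_iff (a : ι → ℝ) {c : ℝ} (hc : 1 ≤ c * Fintype.card ι) (B : ℝ) :
    (∀ μ : ι → ℝ, (∀ i, 0 ≤ μ i) → ∑ i, μ i = 1 → (∀ i, μ i ≤ c) → ∑ i, μ i * a i ≤ B) ↔
      ∃ (t : ℝ) (w : ι → ℝ), (∀ i, 0 ≤ w i) ∧ t + c * ∑ i, w i ≤ B ∧ ∀ i, a i ≤ t + w i := by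
  constructor
  · intro h
    obtain ⟨t, μ, hμ₀, hμ₁, hμc, hval⟩ := exists_capped_weights_sum_mul_eq a hc
    refine ⟨t, fun i => max (a i - t) 0, fun i => le_max_right _ _, hval ▸ h μ hμ₀ hμ₁ hμc,
      fun i => ?_⟩
    linarith [le_max_left (a i - t) 0]
  · rintro ⟨t, w, hw₀, hB, haw⟩ μ hμ₀ hμ₁ hμc
    exact (sum_mul_le_add_mul_sum hμ₀ hμ₁ hμc hw₀ haw).trans hB

end

theorem robust_counterpart_cvar_general
    {K E : Type*} [Fintype K] [Fintype E]
    (N : ℕ) (hN : 0 < N) (α : ℝ) (hα : α ∈ Set.Icc (0 : ℝ) (1 - 1 / N))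
    (dData : Fin N → K → ℝ) (lam : K → ℝ)
    (ybar R η : E → ℝ) (x : E → ℝ)
    (γ : ℝ) :
    (∀ d : K → ℝ, (∃ μ : Fin N → ℝ, (∀ i, 0 ≤ μ i) ∧ (∑ i, μ i) = 1 ∧
          (∀ i, μ i ≤ 1 / (N * (1 - α))) ∧ d = ∑ i, μ i • dData i) →
        (∑ k, lam k * d k) - (∑ l, (ybar l) ^ 2 * R l * x l * η l) ≤ γ) ↔
    (∃ (t : ℝ) (w : Fin N → ℝ), (∀ i, 0 ≤ w i) ∧
        t + (1 / (N * (1 - α))) * (∑ i, w i) -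
          (∑ l, (ybar l) ^ 2 * R l * x l * η l) ≤ γ ∧
        (∀ i, (∑ k, lam k * dData i k) ≤ t + w i)) := by
  obtain ⟨hα₀, hα₁⟩ := hα
  have hN' : (0 : ℝ) < N := Nat.cast_pos.mpr hN
  have hc : 1 ≤ 1 / (N * (1 - α)) * Fintype.card (Fin N) := by
    have : 0 < 1 - α := by linarith [one_div_pos.mpr hN']
    rw [Fintype.card_fin, div_mul_eq_mul_div, one_mul, le_div_iff₀ (by positivity)]
    nlinarith
  have hobj : ∀ μ : Fin N → ℝ,
      ∑ k, lam k * (∑ i, μ i • dData i) k = ∑ i, μ i * ∑ k, lam k * dData i k := by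
    intro μ
    simp only [Finset.sum_apply, Pi.smul_apply, smul_eq_mul, mul_sum]
    rw [sum_comm]
    exact sum_congr rfl fun i _ => sum_congr rfl fun k _ => by ring
  simp only [sub_le_iff_le_add]
  rw [← forall_capped_weights_sum_mul_le_iff _ hc]
  constructor
  · intro h μ hμ₀ hμ₁ hμc
    exact hobj μ ▸ h _ ⟨μ, hμ₀, hμ₁, hμc, rfl⟩
  · rintro h _ ⟨μ, hμ₀, hμ₁, hμc, rfl⟩
    exact hobj μ ▸ h μ hμ₀ hμ₁ hμc

/-- Equivalence of the semi-infinite constraint over Ξ' with its finite robust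
counterpart (PB2x1)–(PB2x3). -/
theorem robust_counterpart_cvar
    {K E : Type*} [Fintype K] [Fintype E]
    (N : ℕ) (hN : 0 < N) (α : ℝ) (hα : α ∈ Set.Icc (0 : ℝ) (1 - 1 / N))
    (dData : Fin N → K → ℝ) (lam : K → ℝ) (hlam : ∀ k, 0 ≤ lam k)
    (ybar R η : E → ℝ) (hy : ∀ l, 0 ≤ ybar l) (hR : ∀ l, 0 ≤ R l)
    (hη : ∀ l, 0 ≤ η l) (x : E → ℝ) (hx : ∀ l, x l = 0 ∨ x l = 1)
    (γ : ℝ) :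
    (∀ d : K → ℝ, (∃ μ : Fin N → ℝ, (∀ i, 0 ≤ μ i) ∧ (∑ i, μ i) = 1 ∧
          (∀ i, μ i ≤ 1 / (N * (1 - α))) ∧ d = ∑ i, μ i • dData i) →
        (∑ k, lam k * d k) - (∑ l, (ybar l) ^ 2 * R l * x l * η l) ≤ γ) ↔
    (∃ (t : ℝ) (w : Fin N → ℝ), (∀ i, 0 ≤ w i) ∧
        t + (1 / (N * (1 - α))) * (∑ i, w i) -
          (∑ l, (ybar l) ^ 2 * R l * x l * η l) ≤ γ ∧
        (∀ i, (∑ k, lam k * dData i k) ≤ t + w i)) :=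
  robust_counterpart_cvar_general N hN α hα dData lam ybar R η x γ
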